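/- With A, n, S, A[Y], A[U], I₁, I, I₂ as above, let e_1, …, e_n be the standard basis column vectors, let β assign to each k ∈ {1,…,n} a polynomial f_k ∈ A[Y] (with f_1 chosen so that its class is the identity condition datum), and let I₃ ⊆ A[U] be the ideal generated by the entries of the column vectors f_k((U^s))·e_1 − e_k for k = 1, …, n. Then for every commutative A-algebra B there is a bijection between the set of A-algebra homomorphisms A[U]/(I₁ + I₂ + I₃) → B and the set of A-algebra homomorphisms χ : A[Y]/I → M_n(B) such that χ(f_k mod I)·e_1 = e_k for k = 1, …, n; under this bijection ψ corresponds to the χ sending the class of Y_s to (ψ(U^s_{ij}))_{i,j}. -/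

import Mathlib

/-- The generic matrix `(U^s)` whose `(i,j)` entry is the variable `U^s_{ij}` of the
polynomial ring `A[U]`. -/
noncomputable def genMatrix (A : Type*) [CommRing A] (n : ℕ) (S : Type*) (s : S) :
    Matrix (Fin n) (Fin n) (MvPolynomial (S × Fin n × Fin n) A) :=
  Matrix.of fun i j => MvPolynomial.X (s, i, j)

/-- The ideal `I₁` of `A[U]` generated by the entries of the commutators
`(U^s)(U^t) − (U^t)(U^s)`. -/
noncomputable def commIdeal (A : Type*) [CommRing A] (n : ℕ) (S : Type*) :
    Ideal (MvPolynomial (S × Fin n × Fin n) A) :=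
  Ideal.span {p | ∃ (s t : S) (i j : Fin n),
    p = (genMatrix A n S s * genMatrix A n S t
          - genMatrix A n S t * genMatrix A n S s) i j}

/-- Substitution of a family `U : S → R` of elements of an `A`-algebra `R` for the
variables of a multivariate polynomial `f ∈ A[Y_s : s ∈ S]`; for each monomial the
product is taken in some fixed order (for pairwise commuting values, or modulo the
commutator ideal, this is the usual evaluation `f(U)`). -/
noncomputable def matSubst {A R : Type*} [CommRing A] [Ring R] [Algebra A R]
    {S : Type*} (U : S → R) (f : MvPolynomial S A) : R :=
  ∑ m ∈ f.support, algebraMap A R (f.coeff m) *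
    (m.support.toList.map fun s => U s ^ m s).prod

/-- The ideal `I₂` of `A[U]` generated by the entries of the matrices `f((U^s))` for
`f ∈ I`. -/
noncomputable def relIdeal (A : Type*) [CommRing A] (n : ℕ) (S : Type*)
    (I : Ideal (MvPolynomial S A)) : Ideal (MvPolynomial (S × Fin n × Fin n) A) :=
  Ideal.span {p | ∃ f ∈ I, ∃ i j : Fin n, p = matSubst (genMatrix A n S) f i j}

/-- The ideal `I₃` of `A[U]` generated by the entries of the column vectors
`f_k((U^s))·e₁ − e_k`, for `k = 1, …, n`. -/
noncomputable def secIdeal (A : Type*) [CommRing A] (n : ℕ) (hn : 0 < n) (S : Type*)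
    (f : Fin n → MvPolynomial S A) : Ideal (MvPolynomial (S × Fin n × Fin n) A) :=
  Ideal.span {p | ∃ k i : Fin n,
    p = (matSubst (genMatrix A n S) (f k)).mulVec
          (Pi.single (⟨0, hn⟩ : Fin n) 1) i
        - (Pi.single k 1 : Fin n → MvPolynomial (S × Fin n × Fin n) A) i}

open MvPolynomial

section Aux

lemma matSubst_map {A R R' : Type*} [CommRing A] [Ring R] [Ring R'] [Algebra A R]
    [Algebra A R'] {S : Type*} (g : R →ₐ[A] R') (U : S → R) (f : MvPolynomial S A) :
    matSubst (fun s => g (U s)) f = g (matSubst U f) := by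
  unfold matSubst
  rw [map_sum]
  refine Finset.sum_congr rfl fun m _ => ?_
  rw [map_mul, g.commutes, map_list_prod, List.map_map]
  congr 2
  ext s
  simp [Function.comp, map_pow]

lemma matSubst_eq_aeval {A R : Type*} [CommRing A] [CommRing R] [Algebra A R]
    {S : Type*} (U : S → R) (f : MvPolynomial S A) :
    matSubst U f = aeval U f := by
  unfold matSubst
  rw [aeval_def, eval₂_eq]
  refine Finset.sum_congr rfl fun m _ => ?_
  rw [Finset.prod_map_toList]

lemma matSubst_algHom {A R : Type*} [CommRing A] [Ring R] [Algebra A R] {S : Type*}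
    (H : MvPolynomial S A →ₐ[A] R) (g : MvPolynomial S A) :
    matSubst (fun s => H (X s)) g = H g := by
  rw [matSubst_map, matSubst_eq_aeval, aeval_X_left_apply]

variable {A R : Type*} [CommRing A] [Ring R] [Algebra A R] {S : Type*}
  (U : S → R) (hU : ∀ s t, Commute (U s) (U t))

/-- Evaluation algebra hom at a commuting family. -/
noncomputable def commAeval : MvPolynomial S A →ₐ[A] R :=
  letI : CommSemiring (Algebra.adjoin A (Set.range U)) :=
    Algebra.adjoinCommSemiringOfComm A (by
      rintro a ⟨s, rfl⟩ b ⟨t, rfl⟩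
      exact hU s t)
  AlgHom.comp (Algebra.adjoin A (Set.range U)).val
    (aeval fun s =>
      (⟨U s, Algebra.subset_adjoin (Set.mem_range_self s)⟩ :
        Algebra.adjoin A (Set.range U)))

lemma commAeval_X (s : S) : commAeval U hU (X s : MvPolynomial S A) = U s := by
  simp [commAeval]

lemma commAeval_eq_matSubst (g : MvPolynomial S A) :
    commAeval U hU g = matSubst U g := by
  have h : (fun s => commAeval U hU (X s : MvPolynomial S A)) = U :=
    funext fun s => commAeval_X U hU s
  rw [← matSubst_algHom (commAeval U hU) g, h]

end Aux

section Main

variable {A : Type*} [CommRing A] {n : ℕ} (hn : 0 < n) {S : Type*}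
  (I : Ideal (MvPolynomial S A)) (f : Fin n → MvPolynomial S A)
  {B : Type*} [CommRing B] [Algebra A B]

lemma map_single_one {B : Type*} [Ring B]
    (φ : MvPolynomial (S × Fin n × Fin n) A →+* B) (z j : Fin n) :
    φ ((Pi.single z 1 : Fin n → MvPolynomial (S × Fin n × Fin n) A) j)
      = (Pi.single z (1 : B) : Fin n → B) j := by
  rcases eq_or_ne j z with h | h <;> simp [Pi.single_apply, h]

local notation "bigJ" => commIdeal A n S + relIdeal A n S I + secIdeal A n hn S f

lemma comm_le_bigJ : commIdeal A n S ≤ bigJ := le_sup_left.trans le_sup_left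
lemma rel_le_bigJ : relIdeal A n S I ≤ bigJ := le_sup_right.trans le_sup_left
lemma sec_le_bigJ : secIdeal A n hn S f ≤ bigJ := le_sup_right

/-- The family of matrices associated to `ψ`. -/
noncomputable def psiMat
    (ψ : (MvPolynomial (S × Fin n × Fin n) A ⧸ bigJ) →ₐ[A] B) (s : S) :
    Matrix (Fin n) (Fin n) B :=
  (AlgHom.mapMatrix (ψ.comp (Ideal.Quotient.mkₐ A bigJ))) (genMatrix A n S s)

lemma psiMat_apply (ψ : (MvPolynomial (S × Fin n × Fin n) A ⧸ bigJ) →ₐ[A] B)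
    (s : S) (i j : Fin n) :
    psiMat hn I f ψ s i j
      = ψ (Ideal.Quotient.mk bigJ (MvPolynomial.X (s, i, j))) := by
  simp [psiMat, genMatrix, Ideal.Quotient.mkₐ_eq_mk]

lemma psiMat_zero (ψ : (MvPolynomial (S × Fin n × Fin n) A ⧸ bigJ) →ₐ[A] B)
    {x : MvPolynomial (S × Fin n × Fin n) A} (hx : x ∈ bigJ) :
    ψ.comp (Ideal.Quotient.mkₐ A bigJ) x = 0 := by
  rw [AlgHom.comp_apply, Ideal.Quotient.mkₐ_eq_mk,
    Ideal.Quotient.eq_zero_iff_mem.2 hx, map_zero]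

lemma psiMat_comm (ψ : (MvPolynomial (S × Fin n × Fin n) A ⧸ bigJ) →ₐ[A] B)
    (s t : S) : Commute (psiMat hn I f ψ s) (psiMat hn I f ψ t) := by
  have h : psiMat hn I f ψ s * psiMat hn I f ψ t
      - psiMat hn I f ψ t * psiMat hn I f ψ s = 0 := by
    ext i j
    have : (AlgHom.mapMatrix (ψ.comp (Ideal.Quotient.mkₐ A bigJ)))
        (genMatrix A n S s * genMatrix A n S t
          - genMatrix A n S t * genMatrix A n S s) i j = 0 := by
      rw [AlgHom.mapMatrix_apply, Matrix.map_apply]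
      exact psiMat_zero hn I f ψ (comm_le_bigJ hn I f
        (Ideal.subset_span ⟨s, t, i, j, rfl⟩))
    rw [map_sub, map_mul, map_mul] at this
    simpa [psiMat] using this
  exact sub_eq_zero.mp h

lemma psiMat_matSubst (ψ : (MvPolynomial (S × Fin n × Fin n) A ⧸ bigJ) →ₐ[A] B)
    (g : MvPolynomial S A) :
    matSubst (psiMat hn I f ψ) g
      = (AlgHom.mapMatrix (ψ.comp (Ideal.Quotient.mkₐ A bigJ)))
          (matSubst (genMatrix A n S) g) := by
  rw [← matSubst_map]
  rfl

/-- Forward construction: the algebra hom `χ` associated to `ψ`. -/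
noncomputable def toChi
    (ψ : (MvPolynomial (S × Fin n × Fin n) A ⧸ bigJ) →ₐ[A] B) :
    (MvPolynomial S A ⧸ I) →ₐ[A] Matrix (Fin n) (Fin n) B :=
  Ideal.Quotient.liftₐ I (commAeval (psiMat hn I f ψ) (psiMat_comm hn I f ψ))
    (by
      intro g hg
      rw [commAeval_eq_matSubst, psiMat_matSubst]
      ext i j
      rw [AlgHom.mapMatrix_apply, Matrix.map_apply]
      exact (psiMat_zero hn I f ψ (rel_le_bigJ hn I f
        (Ideal.subset_span ⟨g, hg, i, j, rfl⟩))).trans rfl)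

lemma toChi_mk (ψ : (MvPolynomial (S × Fin n × Fin n) A ⧸ bigJ) →ₐ[A] B)
    (g : MvPolynomial S A) :
    toChi hn I f ψ (Ideal.Quotient.mk I g)
      = commAeval (psiMat hn I f ψ) (psiMat_comm hn I f ψ) g := by
  simp [toChi, Ideal.Quotient.liftₐ_apply, Ideal.Quotient.lift_mk]
  rfl

lemma toChi_mk_X (ψ : (MvPolynomial (S × Fin n × Fin n) A ⧸ bigJ) →ₐ[A] B)
    (s : S) :
    toChi hn I f ψ (Ideal.Quotient.mk I (MvPolynomial.X s))
      = Matrix.of fun i j : Fin n =>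
          ψ (Ideal.Quotient.mk bigJ (MvPolynomial.X (s, i, j))) := by
  rw [toChi_mk, commAeval_X]
  ext i j
  exact psiMat_apply hn I f ψ s i j

lemma toChi_sec (ψ : (MvPolynomial (S × Fin n × Fin n) A ⧸ bigJ) →ₐ[A] B)
    (k : Fin n) :
    (toChi hn I f ψ (Ideal.Quotient.mk I (f k))).mulVec
        (Pi.single (⟨0, hn⟩ : Fin n) 1) = Pi.single k 1 := by
  rw [toChi_mk, commAeval_eq_matSubst, psiMat_matSubst]
  set φ := ψ.comp (Ideal.Quotient.mkₐ A bigJ) with hφ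
  set N := matSubst (genMatrix A n S) (f k) with hN
  ext i
  have hgen : φ (N.mulVec (Pi.single (⟨0, hn⟩ : Fin n) 1) i
      - (Pi.single k 1 : Fin n → MvPolynomial (S × Fin n × Fin n) A) i) = 0 :=
    psiMat_zero hn I f ψ (sec_le_bigJ hn I f
      (Ideal.subset_span ⟨k, i, rfl⟩))
  rw [map_sub, sub_eq_zero] at hgen
  have hmv : ((AlgHom.mapMatrix φ) N).mulVec
      (Pi.single (⟨0, hn⟩ : Fin n) (1 : B)) i
      = φ (N.mulVec (Pi.single (⟨0, hn⟩ : Fin n) 1) i) := by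
    rw [Matrix.mulVec_single, Matrix.mulVec_single]
    simp [AlgHom.mapMatrix_apply, Matrix.map_apply]
  rw [hmv, hgen]
  exact map_single_one (φ : MvPolynomial (S × Fin n × Fin n) A →+* B) k i

/-- Backward construction: the algebra hom `A[U] → B` associated to `χ`. -/
noncomputable def phiChi
    (χ : (MvPolynomial S A ⧸ I) →ₐ[A] Matrix (Fin n) (Fin n) B) :
    MvPolynomial (S × Fin n × Fin n) A →ₐ[A] B :=
  MvPolynomial.aeval fun p => χ (Ideal.Quotient.mk I (MvPolynomial.X p.1)) p.2.1 p.2.2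

lemma phiChi_gen (χ : (MvPolynomial S A ⧸ I) →ₐ[A] Matrix (Fin n) (Fin n) B)
    (s : S) :
    (AlgHom.mapMatrix (phiChi I χ)) (genMatrix A n S s)
      = χ (Ideal.Quotient.mk I (MvPolynomial.X s)) := by
  ext i j
  simp [phiChi, genMatrix, AlgHom.mapMatrix_apply, Matrix.map_apply]

lemma phiChi_matSubst (χ : (MvPolynomial S A ⧸ I) →ₐ[A] Matrix (Fin n) (Fin n) B)
    (g : MvPolynomial S A) :
    (AlgHom.mapMatrix (phiChi I χ)) (matSubst (genMatrix A n S) g)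
      = χ (Ideal.Quotient.mk I g) := by
  rw [← matSubst_map]
  have h1 : (fun s => (AlgHom.mapMatrix (phiChi I χ)) (genMatrix A n S s))
      = fun s => (χ.comp (Ideal.Quotient.mkₐ A I)) (MvPolynomial.X s) := by
    funext s
    rw [phiChi_gen, AlgHom.comp_apply, Ideal.Quotient.mkₐ_eq_mk]
  rw [h1, matSubst_algHom, AlgHom.comp_apply, Ideal.Quotient.mkₐ_eq_mk]

lemma phiChi_kills (χ : (MvPolynomial S A ⧸ I) →ₐ[A] Matrix (Fin n) (Fin n) B)
    (hχ : ∀ k : Fin n,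
      (χ (Ideal.Quotient.mk I (f k))).mulVec
          (Pi.single (⟨0, hn⟩ : Fin n) 1) = Pi.single k 1) :
    ∀ x ∈ bigJ, phiChi I χ x = 0 := by
  have hker : bigJ ≤ RingHom.ker (phiChi I χ) := by
    refine sup_le (sup_le ?_ ?_) ?_
    · rw [commIdeal, Ideal.span_le]
      rintro p ⟨s, t, i, j, rfl⟩
      rw [SetLike.mem_coe, RingHom.mem_ker]
      have h0 : (AlgHom.mapMatrix (phiChi I χ))
          (genMatrix A n S s * genMatrix A n S t
            - genMatrix A n S t * genMatrix A n S s) = 0 := by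
        rw [map_sub, map_mul, map_mul, phiChi_gen, phiChi_gen, sub_eq_zero,
          ← map_mul, ← map_mul, ← map_mul, ← map_mul]
        exact congrArg _ (congrArg _ (mul_comm _ _))
      have h2 : phiChi I χ ((genMatrix A n S s * genMatrix A n S t
          - genMatrix A n S t * genMatrix A n S s) i j)
          = (AlgHom.mapMatrix (phiChi I χ)) (genMatrix A n S s * genMatrix A n S t
            - genMatrix A n S t * genMatrix A n S s) i j := rfl
      rw [h2, h0]
      rfl
    · rw [relIdeal, Ideal.span_le]
      rintro p ⟨g, hg, i, j, rfl⟩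
      rw [SetLike.mem_coe, RingHom.mem_ker]
      have h2 : phiChi I χ (matSubst (genMatrix A n S) g i j)
          = (AlgHom.mapMatrix (phiChi I χ)) (matSubst (genMatrix A n S) g) i j := rfl
      rw [h2, phiChi_matSubst, Ideal.Quotient.eq_zero_iff_mem.2 hg, map_zero]
      rfl
    · rw [secIdeal, Ideal.span_le]
      rintro p ⟨k, i, rfl⟩
      rw [SetLike.mem_coe, RingHom.mem_ker, map_sub]
      have h1 : phiChi I χ ((matSubst (genMatrix A n S) (f k)).mulVec
          (Pi.single (⟨0, hn⟩ : Fin n) 1) i)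
          = (χ (Ideal.Quotient.mk I (f k))).mulVec
              (Pi.single (⟨0, hn⟩ : Fin n) 1) i := by
        simp only [Matrix.mulVec_single, mul_one, MulOpposite.op_one, one_smul]
        rw [← phiChi_matSubst I χ (f k)]
        rfl
      rw [h1, hχ k]
      rcases eq_or_ne i k with h | h <;> simp [Pi.single_apply, h]
  intro x hx
  exact hker hx

/-- Backward construction as a hom from the quotient. -/
noncomputable def fromChi (χ : (MvPolynomial S A ⧸ I) →ₐ[A] Matrix (Fin n) (Fin n) B)
    (hχ : ∀ k : Fin n,
      (χ (Ideal.Quotient.mk I (f k))).mulVec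
          (Pi.single (⟨0, hn⟩ : Fin n) 1) = Pi.single k 1) :
    (MvPolynomial (S × Fin n × Fin n) A ⧸ bigJ) →ₐ[A] B :=
  Ideal.Quotient.liftₐ bigJ (phiChi I χ) (phiChi_kills hn I f χ hχ)

lemma fromChi_mk (χ : (MvPolynomial S A ⧸ I) →ₐ[A] Matrix (Fin n) (Fin n) B)
    (hχ : ∀ k : Fin n,
      (χ (Ideal.Quotient.mk I (f k))).mulVec
          (Pi.single (⟨0, hn⟩ : Fin n) 1) = Pi.single k 1)
    (x : MvPolynomial (S × Fin n × Fin n) A) :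
    fromChi hn I f χ hχ (Ideal.Quotient.mk bigJ x) = phiChi I χ x := by
  simp [fromChi, Ideal.Quotient.liftₐ_apply, Ideal.Quotient.lift_mk]
  rfl

lemma fromChi_toChi (ψ : (MvPolynomial (S × Fin n × Fin n) A ⧸ bigJ) →ₐ[A] B) :
    fromChi hn I f (toChi hn I f ψ) (toChi_sec hn I f ψ) = ψ := by
  apply Ideal.Quotient.algHom_ext
  apply MvPolynomial.algHom_ext
  rintro ⟨s, i, j⟩
  simp only [AlgHom.comp_apply, Ideal.Quotient.mkₐ_eq_mk]
  rw [fromChi_mk]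
  show phiChi I (toChi hn I f ψ) (MvPolynomial.X (s, i, j))
      = ψ (Ideal.Quotient.mk bigJ (MvPolynomial.X (s, i, j)))
  rw [phiChi, MvPolynomial.aeval_X]
  rw [toChi_mk_X]
  rfl

lemma toChi_fromChi (χ : (MvPolynomial S A ⧸ I) →ₐ[A] Matrix (Fin n) (Fin n) B)
    (hχ : ∀ k : Fin n,
      (χ (Ideal.Quotient.mk I (f k))).mulVec
          (Pi.single (⟨0, hn⟩ : Fin n) 1) = Pi.single k 1) :
    toChi hn I f (fromChi hn I f χ hχ) = χ := by
  apply Ideal.Quotient.algHom_ext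
  apply MvPolynomial.algHom_ext
  intro s
  simp only [AlgHom.comp_apply, Ideal.Quotient.mkₐ_eq_mk]
  rw [toChi_mk_X]
  ext i j
  rw [Matrix.of_apply, fromChi_mk, phiChi, MvPolynomial.aeval_X]

end Main

/-- For every commutative `A`-algebra `B` there is a bijection between
the `A`-algebra homomorphisms `A[U]/(I₁ + I₂ + I₃) → B` and the `A`-algebra
homomorphisms `χ : A[Y]/I → M_n(B)` with `χ(f_k mod I)·e₁ = e_k` for `k = 1, …, n`;
under it `ψ` corresponds to the `χ` sending the class of `Y_s` to `(ψ U^s_{ij})_{ij}`. -/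
theorem stmt8 (A : Type*) [CommRing A] (n : ℕ) (hn : 0 < n) (S : Type*)
    (I : Ideal (MvPolynomial S A)) (f : Fin n → MvPolynomial S A)
    (B : Type*) [CommRing B] [Algebra A B] :
    ∃ e : ((MvPolynomial (S × Fin n × Fin n) A ⧸
            (commIdeal A n S + relIdeal A n S I + secIdeal A n hn S f)) →ₐ[A] B) ≃
          {χ : (MvPolynomial S A ⧸ I) →ₐ[A] Matrix (Fin n) (Fin n) B //
            ∀ k : Fin n,
              (χ (Ideal.Quotient.mk I (f k))).mulVec
                  (Pi.single (⟨0, hn⟩ : Fin n) 1) = Pi.single k 1},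
      ∀ (ψ : (MvPolynomial (S × Fin n × Fin n) A ⧸
            (commIdeal A n S + relIdeal A n S I + secIdeal A n hn S f)) →ₐ[A] B) (s : S),
        (e ψ : (MvPolynomial S A ⧸ I) →ₐ[A] Matrix (Fin n) (Fin n) B)
            (Ideal.Quotient.mk I (MvPolynomial.X s)) =
          Matrix.of fun i j : Fin n =>
            ψ (Ideal.Quotient.mk (commIdeal A n S + relIdeal A n S I + secIdeal A n hn S f)
              (MvPolynomial.X (s, i, j))) := by
  refine ⟨⟨fun ψ => ⟨toChi hn I f ψ, toChi_sec hn I f ψ⟩,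
    fun χp => fromChi hn I f χp.1 χp.2,
    fun ψ => fromChi_toChi hn I f ψ,
    fun χp => Subtype.ext (toChi_fromChi hn I f χp.1 χp.2)⟩, ?_⟩
  intro ψ s
  exact toChi_mk_X hn I f ψ s
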